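/- arXiv:1204.5494 — 3 statements merged into one kernel-verified Lean document; each statement's English description precedes it below -/
import Mathlib

section
/- Let t > 0 and p = (0, t) ∈ ℝ². Let q₁ = (u₁, v₁) and q₂ = (u₂, v₂) be points of the unit circle centered at the origin (i.e. ‖q₁‖ = ‖q₂‖ = 1) with q₁ ≠ p and q₂ ≠ q₁, and suppose the chord [q₁, q₂] is perpendicular to the segment [p, q₁], i.e. ⟪q₂ − q₁, q₁ − p⟫ = 0. Then u₂ · ‖q₁ − p‖² = (1 − t²) · u₁; equivalently, u₂ · (1 − 2·v₁·t + t²) = (1 − t²) · u₁. -/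
open scoped RealInnerProductSpace

/-! Since `q₁` and `q₂` lie on the same circle about the origin, the nonzero chord `q₂ - q₁` is
orthogonal to `q₂ + q₁`, and by hypothesis also to `q₁ - p`. In the plane this forces `q₁ - p`
and `q₂ + q₁` to be parallel, i.e. `u₁ (v₂ + v₁) = (v₁ - t) (u₂ + u₁)`; combined with
`u₁² + v₁² = 1` and the perpendicularity relation, this linear identity in `u₂, v₂` yields the
formula. -/

namespace EuclideanSpace

theorem inner_fin_two (x y : EuclideanSpace ℝ (Fin 2)) : ⟪x, y⟫ = x 0 * y 0 + x 1 * y 1 := by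
  simp only [PiLp.inner_apply, RCLike.inner_apply, conj_trivial, Fin.sum_univ_two]
  ring

theorem norm_sq_fin_two (x : EuclideanSpace ℝ (Fin 2)) : ‖x‖ ^ 2 = x 0 ^ 2 + x 1 ^ 2 := by
  rw [← real_inner_self_eq_norm_sq, inner_fin_two]
  ring

theorem det_eq_zero_of_inner_eq_zero {w a b : EuclideanSpace ℝ (Fin 2)} (hw : w ≠ 0)
    (ha : ⟪w, a⟫ = 0) (hb : ⟪w, b⟫ = 0) : a 0 * b 1 - a 1 * b 0 = 0 := by
  rw [inner_fin_two] at ha hb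
  have hw' : w 0 ≠ 0 ∨ w 1 ≠ 0 := by
    by_contra! h
    exact hw (by ext i; fin_cases i <;> simp [h.1, h.2])
  rcases hw' with h | h
  · exact (mul_eq_zero.mp (by linear_combination b 1 * ha - a 1 * hb :
      (a 0 * b 1 - a 1 * b 0) * w 0 = 0)).resolve_right h
  · exact (mul_eq_zero.mp (by linear_combination a 0 * hb - b 0 * ha :
      (a 0 * b 1 - a 1 * b 0) * w 1 = 0)).resolve_right h

end EuclideanSpace

open EuclideanSpace in
theorem stmt0_general (t u₁ v₁ u₂ v₂ : ℝ)
    (p q₁ q₂ : EuclideanSpace ℝ (Fin 2))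
    (hp0 : p 0 = 0) (hp1 : p 1 = t)
    (hq₁0 : q₁ 0 = u₁) (hq₁1 : q₁ 1 = v₁)
    (hq₂0 : q₂ 0 = u₂) (hq₂1 : q₂ 1 = v₂)
    (hq₁ : ‖q₁‖ = 1) (hq₂ : ‖q₂‖ = 1)
    (hne₂ : q₂ ≠ q₁)
    (hperp : ⟪q₂ - q₁, q₁ - p⟫ = 0) :
    u₂ * ‖q₁ - p‖ ^ 2 = (1 - t ^ 2) * u₁ ∧
      u₂ * (1 - 2 * v₁ * t + t ^ 2) = (1 - t ^ 2) * u₁ := by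
  have hchord : ⟪q₂ - q₁, q₂ + q₁⟫ = 0 := by
    rw [real_inner_comm]
    exact (real_inner_add_sub_eq_zero_iff q₂ q₁).mpr (hq₂.trans hq₁.symm)
  have hdet := det_eq_zero_of_inner_eq_zero (sub_ne_zero.mpr hne₂) hperp hchord
  have hcircle := norm_sq_fin_two q₁
  have hdist := norm_sq_fin_two (q₁ - p)
  rw [inner_fin_two] at hperp
  simp only [PiLp.sub_apply, PiLp.add_apply, hp0, hp1, hq₁0, hq₁1, hq₂0, hq₂1, hq₁] at hperp hdet hcircle hdist
  have key : u₂ * (1 - 2 * v₁ * t + t ^ 2) = (1 - t ^ 2) * u₁ := by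
    linear_combination u₁ * hperp + (t - v₁) * hdet + (u₂ - u₁) * hcircle
  refine ⟨?_, key⟩
  rw [hdist]
  linear_combination key - u₂ * hcircle

/-- Chord formula on the unit circle (proof of Lemma 3.4 of the paper):
if `q₁`, `q₂` lie on the unit circle, `p = (0, t)` with `t > 0`, and the chord
`[q₁, q₂]` is perpendicular to `[p, q₁]`, then
`u₂ · ‖q₁ − p‖² = (1 − t²) · u₁`, equivalently
`u₂ · (1 − 2·v₁·t + t²) = (1 − t²) · u₁`. -/
theorem stmt0 (t u₁ v₁ u₂ v₂ : ℝ) (ht : 0 < t)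
    (p q₁ q₂ : EuclideanSpace ℝ (Fin 2))
    (hp0 : p 0 = 0) (hp1 : p 1 = t)
    (hq₁0 : q₁ 0 = u₁) (hq₁1 : q₁ 1 = v₁)
    (hq₂0 : q₂ 0 = u₂) (hq₂1 : q₂ 1 = v₂)
    (hq₁ : ‖q₁‖ = 1) (hq₂ : ‖q₂‖ = 1)
    (hne₁ : q₁ ≠ p) (hne₂ : q₂ ≠ q₁)
    (hperp : ⟪q₂ - q₁, q₁ - p⟫ = 0) :
    u₂ * ‖q₁ - p‖ ^ 2 = (1 - t ^ 2) * u₁ ∧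
      u₂ * (1 - 2 * v₁ * t + t ^ 2) = (1 - t ^ 2) * u₁ :=
  stmt0_general t u₁ v₁ u₂ v₂ p q₁ q₂ hp0 hp1 hq₁0 hq₁1 hq₂0 hq₂1 hq₁ hq₂ hne₂ hperp
end

section
/- Let 0 < t < 1 and p = (0, t) ∈ ℝ². For each n ∈ ℕ let q₁ⁿ = (u₁ⁿ, v₁ⁿ) and q₂ⁿ = (u₂ⁿ, v₂ⁿ) be points of the unit circle centered at the origin with v₁ⁿ > 0, u₁ⁿ ≠ 0, q₂ⁿ ≠ q₁ⁿ, and ⟪q₂ⁿ − q₁ⁿ, q₁ⁿ − p⟫ = 0 (the chord [q₁ⁿ, q₂ⁿ] is perpendicular to [p, q₁ⁿ]). If u₁ⁿ → 0 as n → ∞, then u₂ⁿ / u₁ⁿ → (1 + t)/(1 − t). -/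
open scoped RealInnerProductSpace Topology
open Filter

/-!
Write `q₁ = (u, v)` and `q₂ = (U, V)`. Subtracting the two circle equations and using the
perpendicularity relation, the factor `U - u ≠ 0` cancels and leaves the explicit formula
`U · (1 - 2tv + t²) = (1 - t²) · u`. As `u → 0` with `v > 0`, we get `v → 1`, so
`U / u = (1 - t²) / (1 - 2tv + t²) → (1 - t²) / (1 - t)² = (1 + t) / (1 - t)`.
-/

lemma EuclideanSpace.fin_two_sq_add_sq_of_norm_eq_one {x : EuclideanSpace ℝ (Fin 2)}
    (hx : ‖x‖ = 1) : x 0 ^ 2 + x 1 ^ 2 = 1 := by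
  simpa [Fin.sum_univ_two, hx] using (EuclideanSpace.real_norm_sq_eq x).symm

lemma EuclideanSpace.fin_two_real_inner (x y : EuclideanSpace ℝ (Fin 2)) :
    ⟪x, y⟫ = x 0 * y 0 + x 1 * y 1 := by
  simp [PiLp.inner_apply, Fin.sum_univ_two, mul_comm]

lemma perp_chord_mul_eq {t u v U V : ℝ} (hq₁ : u ^ 2 + v ^ 2 = 1) (hq₂ : U ^ 2 + V ^ 2 = 1)
    (hperp : (U - u) * u + (V - v) * (v - t) = 0) (hvt : v ≠ t) (hne : (U, V) ≠ (u, v)) :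
    U * (1 - 2 * t * v + t ^ 2) = (1 - t ^ 2) * u := by
  have hUu : U - u ≠ 0 := by
    intro hU
    have hV : (V - v) * (v - t) = 0 := by simpa [hU] using hperp
    have hV' : V = v := by simpa [sub_eq_zero, hvt] using hV
    exact hne (by rw [sub_eq_zero.mp hU, hV'])
  have hchord : (U + u) * (v - t) - u * (V + v) = 0 := by
    refine (mul_eq_zero.mp ?_).resolve_left hUu
    linear_combination (v - t) * (hq₂ - hq₁) - (V + v) * hperp
  linear_combination (v - t) * hchord + u * hperp + (u - U) * hq₁

lemma tendsto_one_of_sq_add_sq_eq_one {ι : Type*} {l : Filter ι} {u v : ι → ℝ}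
    (hc : ∀ i, u i ^ 2 + v i ^ 2 = 1) (hv : ∀ i, 0 < v i) (hu : Tendsto u l (𝓝 0)) :
    Tendsto v l (𝓝 1) := by
  have hv_eq : ∀ i, Real.sqrt (1 - u i ^ 2) = v i := fun i => by
    rw [← hc i, add_sub_cancel_left, Real.sqrt_sq (hv i).le]
  have hlim : Tendsto (fun i => Real.sqrt (1 - u i ^ 2)) l (𝓝 (Real.sqrt (1 - 0 ^ 2))) :=
    ((tendsto_const_nhds.sub (hu.pow 2)).sqrt)
  simpa [hv_eq] using hlim

theorem stmt1_general (t : ℝ) (ht1 : t < 1)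
    (p : EuclideanSpace ℝ (Fin 2)) (hp0 : p 0 = 0) (hp1 : p 1 = t)
    (q₁ q₂ : ℕ → EuclideanSpace ℝ (Fin 2))
    (hq₁ : ∀ n, ‖q₁ n‖ = 1) (hq₂ : ∀ n, ‖q₂ n‖ = 1)
    (hv₁ : ∀ n, 0 < q₁ n 1) (hu₁ : ∀ n, q₁ n 0 ≠ 0)
    (hne : ∀ n, q₂ n ≠ q₁ n)
    (hperp : ∀ n, ⟪q₂ n - q₁ n, q₁ n - p⟫ = 0)
    (hlim : Tendsto (fun n => q₁ n 0) atTop (nhds 0)) :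
    Tendsto (fun n => q₂ n 0 / q₁ n 0) atTop (nhds ((1 + t) / (1 - t))) := by
  have hc₁ n := EuclideanSpace.fin_two_sq_add_sq_of_norm_eq_one (hq₁ n)
  have hv : Tendsto (fun n => q₁ n 1) atTop (𝓝 1) :=
    tendsto_one_of_sq_add_sq_eq_one hc₁ hv₁ hlim
  have hformula : ∀ᶠ n in atTop,
      (1 - t ^ 2) / (1 - 2 * t * q₁ n 1 + t ^ 2) = q₂ n 0 / q₁ n 0 := by
    filter_upwards [hv.eventually (eventually_gt_nhds ht1)] with n hvt
    have hperp' := hperp n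
    rw [EuclideanSpace.fin_two_real_inner] at hperp'
    have key := perp_chord_mul_eq (hc₁ n)
      (EuclideanSpace.fin_two_sq_add_sq_of_norm_eq_one (hq₂ n))
      (by simpa [hp0, hp1] using hperp') hvt.ne'
      (fun h => hne n (by ext i; fin_cases i <;> simp_all))
    have hden : 1 - 2 * t * q₁ n 1 + t ^ 2 ≠ 0 := by
      nlinarith [hc₁ n, sq_nonneg (q₁ n 1 - t), sq_pos_of_ne_zero (hu₁ n)]
    rw [div_eq_div_iff hden (hu₁ n), ← key]
  have h1t : 1 - t ≠ 0 := sub_ne_zero.mpr ht1.ne'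
  have hden : Tendsto (fun n => 1 - 2 * t * q₁ n 1 + t ^ 2) atTop (𝓝 ((1 - t) ^ 2)) := by
    convert (tendsto_const_nhds.sub (tendsto_const_nhds.mul hv)).add tendsto_const_nhds using 2
    ring
  have hvalue : (1 - t ^ 2) / (1 - t) ^ 2 = (1 + t) / (1 - t) := by
    rw [div_eq_div_iff (pow_ne_zero 2 h1t) h1t]
    ring
  exact (hvalue ▸ tendsto_const_nhds.div hden (pow_ne_zero 2 h1t)).congr' hformula

/-- Part (1) of Lemma 3.4 (lem:limit) of the paper: with `p = (0, t)`, `0 < t < 1`,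
and points `q₁ⁿ = (u₁ⁿ, v₁ⁿ)`, `q₂ⁿ = (u₂ⁿ, v₂ⁿ)` on the unit circle with `v₁ⁿ > 0`,
`u₁ⁿ ≠ 0`, `q₂ⁿ ≠ q₁ⁿ` and the chord `[q₁ⁿ, q₂ⁿ]` perpendicular to `[p, q₁ⁿ]`,
if `u₁ⁿ → 0` then `u₂ⁿ / u₁ⁿ → (1 + t)/(1 − t)`. -/
theorem stmt1 (t : ℝ) (ht0 : 0 < t) (ht1 : t < 1)
    (p : EuclideanSpace ℝ (Fin 2)) (hp0 : p 0 = 0) (hp1 : p 1 = t)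
    (q₁ q₂ : ℕ → EuclideanSpace ℝ (Fin 2))
    (hq₁ : ∀ n, ‖q₁ n‖ = 1) (hq₂ : ∀ n, ‖q₂ n‖ = 1)
    (hv₁ : ∀ n, 0 < q₁ n 1) (hu₁ : ∀ n, q₁ n 0 ≠ 0)
    (hne : ∀ n, q₂ n ≠ q₁ n)
    (hperp : ∀ n, ⟪q₂ n - q₁ n, q₁ n - p⟫ = 0)
    (hlim : Tendsto (fun n => q₁ n 0) atTop (nhds 0)) :
    Tendsto (fun n => q₂ n 0 / q₁ n 0) atTop (nhds ((1 + t) / (1 - t))) :=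
  stmt1_general t ht1 p hp0 hp1 q₁ q₂ hq₁ hq₂ hv₁ hu₁ hne hperp hlim
end

section
/- Let 0 < t < 1, c ∈ ℝ, and p = (0, t) ∈ ℝ². For u ∈ (0, 1) set q₁(u) = (u, √(1 − u²)), let d(u) ∈ ℝ² be the counterclockwise rotation of the vector q₁(u) − p by the angle π/2 − c·u, and let q₂(u) = q₁(u) − (2⟪q₁(u), d(u)⟫ / ‖d(u)‖²) · d(u) be the second intersection point of the unit circle with the line through q₁(u) in direction d(u). Then the first coordinate u₂(u) of q₂(u) satisfies u₂(u)/u → (1 + t)/(1 − t) + 2c as u → 0⁺. -/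
open Filter

/-- The point `q₁(u) = (u, √(1 − u²))` of the unit circle. -/
noncomputable def q₁fun (u : ℝ) : ℝ × ℝ := (u, Real.sqrt (1 - u ^ 2))

/-- Counterclockwise rotation of a vector of `ℝ²` by angle `θ`. -/
noncomputable def rotCCW (θ : ℝ) (v : ℝ × ℝ) : ℝ × ℝ :=
  (v.1 * Real.cos θ - v.2 * Real.sin θ, v.1 * Real.sin θ + v.2 * Real.cos θ)

/-- The standard inner product of `ℝ²`. -/
def inner2 (v w : ℝ × ℝ) : ℝ := v.1 * w.1 + v.2 * w.2

/-- The direction `d(u)`: the vector `q₁(u) − p`, `p = (0, t)`, rotated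
counterclockwise by the angle `π/2 − c·u`. -/
noncomputable def dfun (t c u : ℝ) : ℝ × ℝ :=
  rotCCW (Real.pi / 2 - c * u) (q₁fun u - (0, t))

/-- The second intersection point `q₂(u)` of the unit circle with the line through
`q₁(u)` in direction `d(u)`; here `‖d‖² = ⟪d, d⟫`. -/
noncomputable def q₂fun (t c u : ℝ) : ℝ × ℝ :=
  q₁fun u -
    (2 * inner2 (q₁fun u) (dfun t c u) / inner2 (dfun t c u) (dfun t c u)) • dfun t c u

/-!
At `u = 0` the chord degenerates to the tangent at `(0, 1)`: `d(0) = (t - 1, 0)` is orthogonal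
to `q₁(0)`, so `q₂(0) = q₁(0)` and `u₂(u)/u` is a difference quotient of `u₂` at `0`.
Differentiating `q₂ = q₁ - k • d`, where `k = 2⟪q₁, d⟫/‖d‖²` vanishes at `0`, with
`q₁'(0) = (1, 0)` and `d'(0) = (0, 1 + c(1 - t))` gives
`u₂'(0) = 1 - k'(0)(t - 1) = 1 + 2(t + c(1 - t))/(1 - t)`.
-/

section Derivatives

variable {f g : ℝ → ℝ × ℝ} {f' g' : ℝ × ℝ} {x : ℝ}

theorem HasDerivAt.prod_fst (hf : HasDerivAt f f' x) :
    HasDerivAt (fun u => (f u).1) f'.1 x :=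
  (ContinuousLinearMap.fst ℝ ℝ ℝ).hasFDerivAt.comp_hasDerivAt x hf

theorem HasDerivAt.prod_snd (hf : HasDerivAt f f' x) :
    HasDerivAt (fun u => (f u).2) f'.2 x :=
  (ContinuousLinearMap.snd ℝ ℝ ℝ).hasFDerivAt.comp_hasDerivAt x hf

theorem hasDerivAt_inner2 (hf : HasDerivAt f f' x) (hg : HasDerivAt g g' x) :
    HasDerivAt (fun u => inner2 (f u) (g u)) (inner2 f' (g x) + inner2 (f x) g') x := by
  refine ((hf.prod_fst.mul hg.prod_fst).add (hf.prod_snd.mul hg.prod_snd)).congr_deriv ?_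
  simp only [inner2]
  ring

theorem hasDerivAt_rotCCW {θ : ℝ → ℝ} {θ' : ℝ} (hθ : HasDerivAt θ θ' x)
    (hf : HasDerivAt f f' x) :
    HasDerivAt (fun u => rotCCW (θ u) (f u))
      (rotCCW (θ x) f' + θ' • rotCCW (θ x + Real.pi / 2) (f x)) x := by
  have hc := hθ.cos
  have hs := hθ.sin
  refine (((hf.prod_fst.mul hc).sub (hf.prod_snd.mul hs)).prodMk
    ((hf.prod_fst.mul hs).add (hf.prod_snd.mul hc))).congr_deriv ?_
  ext <;> simp only [rotCCW, Real.cos_add_pi_div_two, Real.sin_add_pi_div_two,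
    Prod.fst_add, Prod.snd_add, Prod.smul_fst, Prod.smul_snd, smul_eq_mul] <;> ring

/- `v - (2⟪v, d⟫/‖d‖²) • d` is the reflection of `v` in the line `d^⊥`; the hypothesis
`hfg` makes the coefficient vanish at `x`, so only its derivative survives. -/
theorem hasDerivAt_reflection_of_inner2_eq_zero (hf : HasDerivAt f f' x) (hg : HasDerivAt g g' x)
    (hfg : inner2 (f x) (g x) = 0) (hg0 : inner2 (g x) (g x) ≠ 0) :
    HasDerivAt (fun u => f u - (2 * inner2 (f u) (g u) / inner2 (g u) (g u)) • g u)
      (f' - (2 * (inner2 f' (g x) + inner2 (f x) g') / inner2 (g x) (g x)) • g x) x := by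
  have hk := ((hasDerivAt_inner2 hf hg).const_mul 2).div (hasDerivAt_inner2 hg hg) hg0
  refine (hf.sub (hk.smul hg)).congr_deriv ?_
  simp [hfg, sq, mul_div_mul_right _ _ hg0]

end Derivatives

theorem q₁fun_zero : q₁fun 0 = (0, 1) := by simp [q₁fun]

theorem dfun_zero (t c : ℝ) : dfun t c 0 = (t - 1, 0) := by
  simp [dfun, rotCCW, q₁fun]

theorem hasDerivAt_q₁fun_zero : HasDerivAt q₁fun (1, 0) 0 := by
  have h := ((hasDerivAt_pow 2 (0:ℝ)).const_sub 1).sqrt (by norm_num)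
  refine ((hasDerivAt_id (0:ℝ)).prodMk h).congr_deriv ?_
  norm_num

theorem hasDerivAt_dfun_zero (t c : ℝ) :
    HasDerivAt (dfun t c) (0, 1 + c * (1 - t)) 0 := by
  have hθ : HasDerivAt (fun u : ℝ => Real.pi / 2 - c * u) (-c) 0 := by
    simpa using ((hasDerivAt_id (0:ℝ)).const_mul c).const_sub (Real.pi / 2)
  refine (hasDerivAt_rotCCW hθ (hasDerivAt_q₁fun_zero.sub_const (0, t))).congr_deriv ?_
  ext <;> simp [rotCCW, q₁fun_zero, mul_sub]

theorem hasDerivAt_q₂fun_fst_zero (t c : ℝ) (ht1 : t < 1) :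
    HasDerivAt (fun u => (q₂fun t c u).1) ((1 + t) / (1 - t) + 2 * c) 0 := by
  have hfg : inner2 (q₁fun 0) (dfun t c 0) = 0 := by simp [q₁fun_zero, dfun_zero, inner2]
  have hg0 : inner2 (dfun t c 0) (dfun t c 0) ≠ 0 := by
    simpa [dfun_zero, inner2] using sub_ne_zero.mpr ht1.ne
  refine (hasDerivAt_reflection_of_inner2_eq_zero hasDerivAt_q₁fun_zero (hasDerivAt_dfun_zero t c)
    hfg hg0).prod_fst.congr_deriv ?_
  have ht : t - 1 ≠ 0 := sub_ne_zero.mpr ht1.ne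
  have ht' : 1 - t ≠ 0 := sub_ne_zero.mpr ht1.ne'
  simp only [inner2, q₁fun_zero, dfun_zero, Prod.smul_mk, Prod.mk_sub_mk, smul_eq_mul]
  field_simp
  ring

theorem q₂fun_fst_zero (t c : ℝ) : (q₂fun t c 0).1 = 0 := by
  simp [q₂fun, q₁fun_zero, dfun_zero, inner2]

theorem stmt2_general (t c : ℝ) (ht1 : t < 1) :
    Tendsto (fun u => (q₂fun t c u).1 / u) (nhdsWithin 0 (Set.Ioi 0))
      (nhds ((1 + t) / (1 - t) + 2 * c)) := by
  have h := (hasDerivAt_q₂fun_fst_zero t c ht1).tendsto_slope_zero_right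
  simpa [q₂fun_fst_zero, div_eq_inv_mul] using h

/-- Part (2) of Lemma 3.4 (lem:limit) of the paper: if the chord through `q₁(u)`
makes the angle `π/2 − c·u` with the segment `[p, q₁(u)]`, `p = (0, t)`, then the
first coordinate `u₂(u)` of the second intersection point `q₂(u)` satisfies
`u₂(u)/u → (1 + t)/(1 − t) + 2c` as `u → 0⁺`. -/
theorem stmt2 (t c : ℝ) (ht0 : 0 < t) (ht1 : t < 1) :
    Tendsto (fun u => (q₂fun t c u).1 / u) (nhdsWithin 0 (Set.Ioi 0))
      (nhds ((1 + t) / (1 - t) + 2 * c)) :=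
  stmt2_general t c ht1
end
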